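/- arXiv:1409.2006 — 9 statements merged into one kernel-verified Lean document; each statement's English description precedes it below -/
import Mathlib

section
/- Let R be a ring with 1 and T = [t_{i,j}] an n×n matrix with all entries in the center Z(R). If the map Θ_T : M_n(R) → M_n(R), Θ_T(A) = T ∗ A, is a ring endomorphism of M_n(R) (i.e., Θ_T(AB) = Θ_T(A)Θ_T(B) for all A,B and Θ_T(I_n) = I_n), then T is transitive: t_{i,i} = 1 and t_{i,j} t_{j,k} = t_{i,k} for all i,j,k ∈ {1,...,n}. -/
/-- A matrix `T` over a ring `R` is transitive if `T i i = 1` and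
`T i j * T j k = T i k` for all `i, j, k`. -/
def IsTransitive {n : ℕ} {R : Type*} [Ring R] (T : Matrix (Fin n) (Fin n) R) : Prop :=
  (∀ i, T i i = 1) ∧ ∀ i j k, T i j * T j k = T i k

/-- Hadamard multiplication by the matrix `T`. -/
def thetaHad {n : ℕ} {R : Type*} [Ring R] (T : Matrix (Fin n) (Fin n) R)
    (A : Matrix (Fin n) (Fin n) R) : Matrix (Fin n) (Fin n) R :=
  Matrix.of fun i j => T i j * A i j

/-- If `T` has central entries and Hadamard multiplication by `T` is a ring
endomorphism of `M_n(R)` (multiplicative and unital), then `T` is transitive. -/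
theorem stmt_7 {n : ℕ} {R : Type*} [Ring R] (T : Matrix (Fin n) (Fin n) R)
    (hZ : ∀ i j, T i j ∈ Subring.center R)
    (hmul : ∀ A B : Matrix (Fin n) (Fin n) R,
      thetaHad T (A * B) = thetaHad T A * thetaHad T B)
    (hone : thetaHad T (1 : Matrix (Fin n) (Fin n) R) = 1) :
    IsTransitive T := by
  constructor
  · intro i
    have := congrFun (congrFun hone i) i
    simpa [thetaHad, Matrix.one_apply] using this
  · intro i j k
    have h := hmul (Matrix.single i j 1) (Matrix.single j k 1)
    have h2 := congrFun (congrFun h i) k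
    simp only [thetaHad, Matrix.of_apply, Matrix.mul_apply,
      Matrix.single_mul_single_same, Matrix.single, Matrix.of_apply] at h2
    simpa [Finset.mul_sum, mul_ite, ite_mul, Finset.sum_ite_eq] using h2.symm
end

section
/- Let R be a ring with 1 in which n is invertible (1/n ∈ R), δ : R → R a ring endomorphism, and T = [t_{i,j}] a transitive n×n matrix over R whose first-column entries t_{i,1} are central invertible elements of R. Define δ̄(r) = (1/n)[x_{i,j}(r)] where x_{i,j}(r) = Σ_{k=0}^{n-1} t_{j,i}^k δ^k(r). Then for every c ∈ Fix(δ) and every r ∈ R one has δ̄(cr) = c δ̄(r) and δ̄(rc) = δ̄(r) c. -/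
/-- The map `δ̄ : R → M_n(R)`, `δ̄(r) = (1/n) [x_{i,j}(r)]` with
`x_{i,j}(r) = Σ_{k=0}^{n-1} t_{j,i}^k δ^k(r)`. -/
def delbar {n : ℕ} {R : Type*} [Ring R] [Invertible (n : R)] (δ : R →+* R)
    (T : Matrix (Fin n) (Fin n) R) (r : R) : Matrix (Fin n) (Fin n) R :=
  Matrix.of fun i j => ⅟(n : R) * ∑ k ∈ Finset.range n, T j i ^ k * (⇑δ)^[k] r

lemma central_entries {n : ℕ} (hn : 0 < n) {R : Type*} [Ring R]
    (T : Matrix (Fin n) (Fin n) R) (hT : IsTransitive T)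
    (hZ : ∀ i, T i ⟨0, hn⟩ ∈ Subring.center R)
    (hU : ∀ i, IsUnit (T i ⟨0, hn⟩)) (i j : Fin n) (x : R) :
    Commute (T i j) x := by
  obtain ⟨u, hu⟩ := hU j
  have key : T i j = T i ⟨0, hn⟩ * ↑u⁻¹ := by
    have h1 : T i j * T j ⟨0, hn⟩ = T i ⟨0, hn⟩ := hT.2 i j ⟨0, hn⟩
    calc T i j = T i j * (↑u * ↑u⁻¹) := by simp
      _ = T i ⟨0, hn⟩ * ↑u⁻¹ := by rw [← mul_assoc, hu, h1]
  have hc0 : Commute (T i ⟨0, hn⟩) x :=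
    (Subring.mem_center_iff.mp (hZ i) x).symm
  have hcu : Commute (↑u : R) x := by
    rw [hu]; exact (Subring.mem_center_iff.mp (hZ j) x).symm
  have hcui : Commute (↑u⁻¹ : R) x := hcu.units_inv_left
  rw [key]
  exact hc0.mul_left hcui

/-- If `1/n ∈ R`, `δ : R → R` is an endomorphism and `T` is transitive with central
invertible first-column entries, then `δ̄(cr) = c δ̄(r)` and `δ̄(rc) = δ̄(r) c`
for every `c ∈ Fix(δ)` and every `r ∈ R`. -/
theorem stmt_8 {n : ℕ} (hn : 0 < n) {R : Type*} [Ring R] [Invertible (n : R)]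
    (δ : R →+* R) (T : Matrix (Fin n) (Fin n) R) (hT : IsTransitive T)
    (hZ : ∀ i, T i ⟨0, hn⟩ ∈ Subring.center R)
    (hU : ∀ i, IsUnit (T i ⟨0, hn⟩)) :
    ∀ c r : R, δ c = c →
      (∀ i j, delbar δ T (c * r) i j = c * delbar δ T r i j) ∧
      (∀ i j, delbar δ T (r * c) i j = delbar δ T r i j * c) := by
  intro c r hc
  have hck : ∀ k, (⇑δ)^[k] c = c := fun k => Function.iterate_fixed hc k
  have hncomm : Commute (⅟(n : R)) c := ((Nat.cast_commute n c).invOf_left)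
  constructor
  · intro i j
    simp only [delbar, Matrix.of_apply]
    have : ∀ k, T j i ^ k * (⇑δ)^[k] (c * r) = c * (T j i ^ k * (⇑δ)^[k] r) := by
      intro k
      rw [iterate_map_mul δ k, hck, ← mul_assoc, ← mul_assoc,
        ((central_entries hn T hT hZ hU j i c).pow_left k).eq]
    rw [Finset.sum_congr rfl fun k _ => this k, ← Finset.mul_sum, ← mul_assoc,
      hncomm.eq, mul_assoc]
  · intro i j
    simp only [delbar, Matrix.of_apply]
    have : ∀ k, T j i ^ k * (⇑δ)^[k] (r * c) = T j i ^ k * (⇑δ)^[k] r * c := by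
      intro k
      rw [iterate_map_mul δ k, hck, mul_assoc]
    rw [Finset.sum_congr rfl fun k _ => this k, ← Finset.sum_mul, mul_assoc]
end

section
/- Let R be a ring with 1 in which n is invertible, δ : R → R a ring endomorphism, and T = [t_{i,j}] a transitive n×n matrix over R whose first-column entries t_{i,1} are central invertible elements. Assume t_{i,1}^n = 1 for all i and that 1 − t_{i,j} is a non-zero divisor in Z(R) for all i ≠ j. Then for every r ∈ Fix(δ), the matrix δ̄(r) = (1/n)[Σ_{k=0}^{n-1} t_{j,i}^k δ^k(r)] equals the scalar matrix r·I_n. -/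
/-- If moreover `t_{i,1}^n = 1` for all `i` and `1 - t_{i,j}` is a non-zero divisor in
`Z(R)` for all `i ≠ j`, then `δ̄(r)` is the scalar matrix `r Iₙ` for every `r ∈ Fix(δ)`. -/
theorem stmt_9 {n : ℕ} (hn : 0 < n) {R : Type*} [Ring R] [Invertible (n : R)]
    (δ : R →+* R) (T : Matrix (Fin n) (Fin n) R) (hT : IsTransitive T)
    (hZ : ∀ i, T i ⟨0, hn⟩ ∈ Subring.center R)
    (hU : ∀ i, IsUnit (T i ⟨0, hn⟩))
    (hpow : ∀ i, T i ⟨0, hn⟩ ^ n = 1)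
    (hnzd : ∀ i j, i ≠ j → ∀ z ∈ Subring.center R, (1 - T i j) * z = 0 → z = 0) :
    ∀ r : R, δ r = r → delbar δ T r = r • (1 : Matrix (Fin n) (Fin n) R) := by
  intro r hr
  set z : Fin n := ⟨0, hn⟩
  have hiter : ∀ k, (⇑δ)^[k] r = r := by
    intro k
    induction k with
    | zero => rfl
    | succ k ih => rw [Function.iterate_succ_apply', ih, hr]
  ext i j
  simp only [delbar, Matrix.of_apply, Matrix.smul_apply, Matrix.one_apply, hiter,
    smul_eq_mul, mul_ite, mul_one, mul_zero]
  rw [← Finset.sum_mul]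
  by_cases h : i = j
  · subst h
    simp only [hT.1 i, one_pow, Finset.sum_const, Finset.card_range, if_pos rfl,
      nsmul_eq_mul, mul_one]
    rw [← mul_assoc, invOf_mul_self, one_mul]
    simp
  · rw [if_neg h]
    -- key facts about T z i
    have ha' : T i z ∈ Subring.center R := hZ i
    have hab1 : T i z * T z i = 1 := by rw [hT.2 i z i, hT.1 i]
    have hab2 : T z i * T i z = 1 := by rw [hT.2 z i z, hT.1 z]
    have hb : T z i ∈ Subring.center R := by
      rw [Subring.mem_center_iff]
      intro g
      have hc := Subring.mem_center_iff.mp ha' g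
      calc g * T z i = (T z i * T i z) * (g * T z i) := by rw [hab2, one_mul]
        _ = T z i * ((T i z * g) * T z i) := by
            rw [mul_assoc, ← mul_assoc (T i z)]
        _ = T z i * ((g * T i z) * T z i) := by rw [← hc]
        _ = T z i * (g * (T i z * T z i)) := by rw [mul_assoc g]
        _ = T z i * g := by rw [hab1, mul_one]
    have ht : T j i ∈ Subring.center R := by
      have : T j z * T z i = T j i := hT.2 j z i
      rw [← this]
      exact Subring.mul_mem _ (hZ j) hb
    have hbn : T z i ^ n = 1 := by
      have hc : Commute (T z i) (T i z) := by
        rw [Commute, SemiconjBy, hab1, hab2]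
      have : (T z i * T i z) ^ n = T z i ^ n * T i z ^ n := hc.mul_pow n
      rw [hab2, one_pow, hpow i, mul_one] at this
      exact this.symm
    have htn : T j i ^ n = 1 := by
      have hc : Commute (T j z) (T z i) :=
        (Subring.mem_center_iff.mp (hZ j) (T z i)).symm
      rw [← hT.2 j z i, hc.mul_pow, hpow j, hbn, one_mul]
    -- geometric sum is zero
    have hS : ∀ x ∈ Finset.range n, T j i ^ x ∈ Subring.center R := fun x _ =>
      Subring.pow_mem _ ht x
    have hSc : (∑ k ∈ Finset.range n, T j i ^ k) ∈ Subring.center R :=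
      Subring.sum_mem _ hS
    have hgeo : (1 - T j i) * (∑ k ∈ Finset.range n, T j i ^ k) = 0 := by
      have := geom_sum_mul (T j i) n
      have h2 : (∑ k ∈ Finset.range n, T j i ^ k) * (1 - T j i) = 0 := by
        have : (∑ k ∈ Finset.range n, T j i ^ k) * (T j i - 1) = 0 := by
          rw [this, htn, sub_self]
        calc (∑ k ∈ Finset.range n, T j i ^ k) * (1 - T j i)
            = -((∑ k ∈ Finset.range n, T j i ^ k) * (T j i - 1)) := by
              rw [← neg_sub (T j i) 1, mul_neg]
          _ = 0 := by rw [this, neg_zero]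
      rw [← Subring.mem_center_iff.mp hSc (1 - T j i)] at h2
      exact h2
    have hzero : (∑ k ∈ Finset.range n, T j i ^ k) = 0 :=
      hnzd j i (fun hji => h hji.symm) _ hSc hgeo
    rw [hzero, zero_mul, mul_zero]
end

section
/- Let R be a ring with 1 in which n is invertible, δ : R → R a ring endomorphism, and T = [t_{i,j}] a transitive n×n matrix over R whose first-column entries t_{i,1} are central invertible elements. Assume t_{1,1}^k + t_{2,1}^k + ⋯ + t_{n,1}^k = 0 and t_{1,1}^{-k} + t_{2,1}^{-k} + ⋯ + t_{n,1}^{-k} = 0 for all 1 ≤ k ≤ n−1. Then the map δ̄ : R → M_n(R) defined by δ̄(r) = (1/n)[Σ_{k=0}^{n-1} t_{j,i}^k δ^k(r)] is an injective ring homomorphism (an embedding of rings). -/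
theorem aux_hP {n : ℕ} {S : Type*} [CommRing S] (u : Fin n → Sˣ)
    (h1 : ∀ k : ℕ, 1 ≤ k → k ≤ n - 1 → (∑ i, (u i : S) ^ k) = 0)
    (h2 : ∀ k : ℕ, 1 ≤ k → k ≤ n - 1 → (∑ i, (((u i)⁻¹ : Sˣ) : S) ^ k) = 0)
    (a b : ℕ) (ha : a < n) (hb : b < n) :
    (∑ l, (u l : S) ^ a * (((u l)⁻¹ : Sˣ) : S) ^ b) = if a = b then (n : S) else 0 := by
  rcases lt_trichotomy a b with h | h | h
  · rw [if_neg (by omega)]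
    have key : ∀ l, (u l : S) ^ a * (((u l)⁻¹ : Sˣ) : S) ^ b
        = (((u l)⁻¹ : Sˣ) : S) ^ (b - a) := by
      intro l
      have hu : ((u l) ^ a * ((u l)⁻¹) ^ b : Sˣ) = ((u l)⁻¹) ^ (b - a) := by
        obtain ⟨c, rfl⟩ : ∃ c, b = a + c := ⟨b - a, by omega⟩
        rw [pow_add, ← mul_assoc, inv_pow, mul_inv_cancel, one_mul,
          Nat.add_sub_cancel_left]
      rw [← Units.val_pow_eq_pow_val, ← Units.val_pow_eq_pow_val, ← Units.val_mul, hu,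
        Units.val_pow_eq_pow_val]
    rw [Finset.sum_congr rfl fun l _ => key l]
    exact h2 (b - a) (by omega) (by omega)
  · subst h
    rw [if_pos rfl]
    have key : ∀ l, (u l : S) ^ a * (((u l)⁻¹ : Sˣ) : S) ^ a = 1 := by
      intro l
      rw [← Units.val_pow_eq_pow_val, ← Units.val_pow_eq_pow_val, ← Units.val_mul,
        inv_pow, mul_inv_cancel, Units.val_one]
    rw [Finset.sum_congr rfl fun l _ => key l]
    simp [Finset.card_univ]
  · rw [if_neg (by omega)]
    have key : ∀ l, (u l : S) ^ a * (((u l)⁻¹ : Sˣ) : S) ^ b = ((u l : S)) ^ (a - b) := by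
      intro l
      have hu : ((u l) ^ a * ((u l)⁻¹) ^ b : Sˣ) = (u l) ^ (a - b) := by
        obtain ⟨c, rfl⟩ : ∃ c, a = b + c := ⟨a - b, by omega⟩
        rw [add_comm b c, pow_add, mul_assoc, inv_pow, mul_inv_cancel, mul_one,
          Nat.add_sub_cancel]
      rw [← Units.val_pow_eq_pow_val, ← Units.val_pow_eq_pow_val, ← Units.val_mul, hu,
        Units.val_pow_eq_pow_val]
    rw [Finset.sum_congr rfl fun l _ => key l]
    exact h1 (a - b) (by omega) (by omega)

theorem aux_hGeom {n : ℕ} {S : Type*} [CommRing S] [Invertible (n : S)] (u : Fin n → Sˣ)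
    (h1 : ∀ k : ℕ, 1 ≤ k → k ≤ n - 1 → (∑ i, (u i : S) ^ k) = 0)
    (h2 : ∀ k : ℕ, 1 ≤ k → k ≤ n - 1 → (∑ i, (((u i)⁻¹ : Sˣ) : S) ^ k) = 0)
    (i j : Fin n) :
    (∑ k ∈ Finset.range n, ((u j : S) * (((u i)⁻¹ : Sˣ) : S)) ^ k)
      = if i = j then (n : S) else 0 := by
  set V : Matrix (Fin n) (Fin n) S := Matrix.of fun p q => (u p : S) ^ (q : ℕ) with hV
  set W : Matrix (Fin n) (Fin n) S :=
    Matrix.of fun q p => ⅟(n : S) * (((u p)⁻¹ : Sˣ) : S) ^ (q : ℕ) with hW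
  have hWV : W * V = 1 := by
    ext q l
    rw [Matrix.mul_apply, Matrix.one_apply]
    have : ∀ p, W q p * V p l
        = ⅟(n : S) * ((u p : S) ^ (l : ℕ) * (((u p)⁻¹ : Sˣ) : S) ^ (q : ℕ)) := by
      intro p; simp only [hV, hW, Matrix.of_apply]; ring
    rw [Finset.sum_congr rfl fun p _ => this p, ← Finset.mul_sum,
      aux_hP u h1 h2 (l : ℕ) (q : ℕ) l.isLt q.isLt]
    rcases eq_or_ne q l with h | h
    · subst h; rw [if_pos rfl, if_pos rfl, invOf_mul_self]
    · rw [if_neg (by simpa using (Fin.val_ne_iff (a := l) (b := q)).mpr (Ne.symm h)),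
        if_neg h, mul_zero]
  have hVW : V * W = 1 := mul_eq_one_comm.mp hWV
  have hentry := congrArg (fun M => M j i) hVW
  simp only [Matrix.mul_apply, Matrix.one_apply] at hentry
  have hstep : ∀ q : Fin n, V j q * W q i
      = ⅟(n : S) * ((u j : S) * (((u i)⁻¹ : Sˣ) : S)) ^ (q : ℕ) := by
    intro q; simp only [hV, hW, Matrix.of_apply, mul_pow]; ring
  rw [Finset.sum_congr rfl fun q _ => hstep q, ← Finset.mul_sum] at hentry
  have := congrArg (fun x => (n : S) * x) hentry
  simp only [← mul_assoc, mul_invOf_self, one_mul] at this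
  rw [← Fin.sum_univ_eq_sum_range (fun k => ((u j : S) * (((u i)⁻¹ : Sˣ) : S)) ^ k) n, this]
  rcases eq_or_ne i j with h | h
  · subst h; rw [if_pos rfl, if_pos rfl, mul_one]
  · rw [if_neg (Ne.symm h), if_neg h, mul_zero]

/-- If `t_{1,1}^k + ⋯ + t_{n,1}^k = 0` and `t_{1,1}^{-k} + ⋯ + t_{n,1}^{-k} = 0` for all
`1 ≤ k ≤ n - 1` (the first-column entries `t_{i,1} = g i` being central units), then
`δ̄ : R → M_n(R)` is an injective ring homomorphism. -/
theorem stmt_10 {n : ℕ} (hn : 0 < n) {R : Type*} [Ring R] [Invertible (n : R)]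
    (δ : R →+* R) (T : Matrix (Fin n) (Fin n) R) (hT : IsTransitive T)
    (g : Fin n → Rˣ) (hg : ∀ i, (g i : R) = T i ⟨0, hn⟩)
    (hZ : ∀ i, T i ⟨0, hn⟩ ∈ Subring.center R)
    (hsum : ∀ k : ℕ, 1 ≤ k → k ≤ n - 1 →
      (∑ i : Fin n, T i ⟨0, hn⟩ ^ k) = 0 ∧ (∑ i : Fin n, (((g i)⁻¹ : Rˣ) : R) ^ k) = 0) :
    Function.Injective (delbar δ T) ∧
    delbar δ T 1 = 1 ∧
    (∀ r s : R, delbar δ T (r + s) = delbar δ T r + delbar δ T s) ∧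
    (∀ r s : R, delbar δ T (r * s) = delbar δ T r * delbar δ T s) := by
  classical
  set C := Subring.center R with hC
  -- centrality facts
  have hgc : ∀ i, (g i : R) ∈ C := fun i => (hg i) ▸ hZ i
  have hgic : ∀ i, (((g i)⁻¹ : Rˣ) : R) ∈ C := fun i =>
    Set.units_inv_mem_center (hgc i)
  have hninv_mem : ⅟(n : R) ∈ C :=
    Set.invOf_mem_center (Set.natCast_mem_center R n)
  letI : Invertible ((n : ℕ) : C) :=
    ⟨⟨⅟(n : R), hninv_mem⟩, Subtype.ext (by push_cast; exact invOf_mul_self _),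
      Subtype.ext (by push_cast; exact mul_invOf_self _)⟩
  -- the units in the center
  set u : Fin n → Cˣ := fun i =>
    ⟨⟨(g i : R), hgc i⟩, ⟨(((g i)⁻¹ : Rˣ) : R), hgic i⟩,
      Subtype.ext ((g i).mul_inv), Subtype.ext ((g i).inv_mul)⟩ with hu
  have h1C : ∀ k : ℕ, 1 ≤ k → k ≤ n - 1 → (∑ i, (u i : C) ^ k) = 0 := by
    intro k hk hk'
    refine Subtype.ext ?_
    have h := (hsum k hk hk').1
    push_cast
    simp only [hu, hg]
    exact h
  have h2C : ∀ k : ℕ, 1 ≤ k → k ≤ n - 1 → (∑ i, (((u i)⁻¹ : Cˣ) : C) ^ k) = 0 := by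
    intro k hk hk'
    refine Subtype.ext ?_
    have h := (hsum k hk hk').2
    push_cast
    simp only [hu]
    exact h
  -- transitivity consequences
  have hT0 : ∀ q, T ⟨0, hn⟩ q = (((g q)⁻¹ : Rˣ) : R) := by
    intro q
    have h1 : T q ⟨0, hn⟩ * T ⟨0, hn⟩ q = 1 := by rw [hT.2, hT.1]
    calc T ⟨0, hn⟩ q = (↑(g q)⁻¹ * ↑(g q)) * T ⟨0, hn⟩ q := by rw [Units.inv_mul, one_mul]
      _ = ↑(g q)⁻¹ * (T q ⟨0, hn⟩ * T ⟨0, hn⟩ q) := by rw [mul_assoc, hg]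
      _ = ↑(g q)⁻¹ := by rw [h1, mul_one]
  have hTji : ∀ p q, T p q = (g p : R) * (((g q)⁻¹ : Rˣ) : R) := by
    intro p q
    rw [← hT.2 p ⟨0, hn⟩ q, ← hg, hT0]
  -- entry formula with central coefficients
  set w : Fin n → Fin n → ℕ → C := fun i j k =>
    ⅟((n : ℕ) : C) * (((u j) * (u i)⁻¹ : Cˣ) : C) ^ k with hw_def
  have hE : ∀ r i j, delbar δ T r i j
      = ∑ k ∈ Finset.range n, ((w i j k : C) : R) * (⇑δ)^[k] r := by
    intro r i j
    simp only [delbar, Matrix.of_apply, Finset.mul_sum]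
    refine Finset.sum_congr rfl fun k _ => ?_
    rw [← mul_assoc]
    congr 1
    have hval : ((w i j k : C) : R) = ⅟(n : R) * ((g j : R) * (((g i)⁻¹ : Rˣ) : R)) ^ k := by
      simp only [hw_def]
      push_cast
      rfl
    rw [hval, hTji j i]
  -- coe of sums helper
  have coe_sum : ∀ {ι : Type} (s : Finset ι) (f : ι → C),
      ((∑ x ∈ s, f x : C) : R) = ∑ x ∈ s, ((f x : C) : R) := by
    intro ι s f
    exact map_sum C.subtype f s
  have central_mul : ∀ (c : R) (d : C) (x y : R),
      (c * x) * ((d : R) * y) = (c * (d : R)) * (x * y) := by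
    intro c d x y
    have hd : ∀ z, z * (d : R) = (d : R) * z := fun z => Subring.mem_center_iff.mp d.2 z
    calc (c * x) * ((d : R) * y) = c * ((x * (d : R)) * y) := by
          rw [mul_assoc, mul_assoc]
      _ = c * (((d : R) * x) * y) := by rw [hd x]
      _ = (c * (d : R)) * (x * y) := by rw [mul_assoc (d : R), ← mul_assoc]
  refine ⟨?_, ?_, ?_, ?_⟩
  · -- injectivity
    have hrec : ∀ r, (∑ i, delbar δ T r i ⟨0, hn⟩) = r := by
      intro r
      simp only [hE]
      rw [Finset.sum_comm]
      have hterm : ∀ k ∈ Finset.range n,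
          (∑ i, ((w i ⟨0, hn⟩ k : C) : R) * (⇑δ)^[k] r) = if k = 0 then r else 0 := by
        intro k hk
        have hkn : k < n := Finset.mem_range.mp hk
        have hws : (∑ i, w i ⟨0, hn⟩ k) = if k = 0 then 1 else 0 := by
          have hterm2 : ∀ i, w i ⟨0, hn⟩ k
              = (⅟((n : ℕ) : C) * ((u ⟨0, hn⟩ : Cˣ) : C) ^ k) * (((u i)⁻¹ : Cˣ) : C) ^ k := by
            intro i
            simp only [hw_def, Units.val_mul, mul_pow]
            ring
          rw [Finset.sum_congr rfl fun i _ => hterm2 i, ← Finset.mul_sum]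
          rcases Nat.eq_zero_or_pos k with h0 | h0
          · subst h0
            simp [Finset.card_univ, mul_comm]
          · rw [if_neg (by omega), h2C k h0 (by omega), mul_zero]
        rw [← Finset.sum_mul, ← coe_sum, hws]
        rcases Nat.eq_zero_or_pos k with h0 | h0
        · subst h0
          simp
        · rw [if_neg (by omega), if_neg (by omega)]
          simp
      rw [Finset.sum_congr rfl hterm, Finset.sum_ite_eq' (Finset.range n) 0 fun _ => r,
        if_pos (Finset.mem_range.mpr hn)]
    intro r s h
    rw [← hrec r, ← hrec s, h]
  · -- one
    ext i j
    rw [hE]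
    have h1' : ∀ k, ((w i j k : C) : R) * (⇑δ)^[k] (1 : R) = ((w i j k : C) : R) := by
      intro k
      rw [iterate_map_one, mul_one]
    rw [Finset.sum_congr rfl fun k _ => h1' k, ← coe_sum]
    have hsumw : (∑ k ∈ Finset.range n, w i j k) = if i = j then 1 else 0 := by
      simp only [hw_def, Units.val_mul, mul_pow, ← Finset.mul_sum]
      rw [← Finset.sum_congr rfl fun k _ => (mul_pow ((u j : Cˣ) : C) (((u i)⁻¹ : Cˣ) : C) k),
        aux_hGeom u h1C h2C i j]
      split
      · rw [invOf_mul_self]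
      · rw [mul_zero]
    rw [hsumw, Matrix.one_apply]
    split <;> simp
  · -- additivity
    intro r s
    ext i j
    rw [Matrix.add_apply, hE, hE, hE, ← Finset.sum_add_distrib]
    refine Finset.sum_congr rfl fun k _ => ?_
    rw [iterate_map_add, mul_add]
  · -- multiplicativity
    intro r s
    have hw : ∀ (i j : Fin n) (a b : ℕ), a < n → b < n →
        (∑ l, w i l a * w l j b) = if a = b then w i j a else 0 := by
      intro i j a b ha hb
      have hterm : ∀ l, w i l a * w l j b
          = (⅟((n : ℕ) : C) * ⅟((n : ℕ) : C) * (((u i)⁻¹ : Cˣ) : C) ^ a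
              * ((u j : Cˣ) : C) ^ b) * ((u l : C) ^ a * (((u l)⁻¹ : Cˣ) : C) ^ b) := by
        intro l
        simp only [hw_def, Units.val_mul, mul_pow]
        ring
      rw [Finset.sum_congr rfl fun l _ => hterm l, ← Finset.mul_sum,
        aux_hP u h1C h2C a b ha hb]
      rcases eq_or_ne a b with h | h
      · subst h
        rw [if_pos rfl, if_pos rfl]
        simp only [hw_def, Units.val_mul, mul_pow]
        linear_combination (⅟((n : ℕ) : C) * ((u j : Cˣ) : C) ^ a
          * (((u i)⁻¹ : Cˣ) : C) ^ a) * invOf_mul_self ((n : ℕ) : C)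
      · rw [if_neg h, if_neg h, mul_zero]
    ext i j
    rw [Matrix.mul_apply]
    simp only [hE]
    symm
    calc (∑ l, (∑ a ∈ Finset.range n, ((w i l a : C) : R) * (⇑δ)^[a] r)
            * (∑ b ∈ Finset.range n, ((w l j b : C) : R) * (⇑δ)^[b] s))
        = ∑ l, ∑ a ∈ Finset.range n, ∑ b ∈ Finset.range n,
            (((w i l a : C) : R) * (⇑δ)^[a] r) * (((w l j b : C) : R) * (⇑δ)^[b] s) := by
          refine Finset.sum_congr rfl fun l _ => ?_
          rw [Finset.sum_mul]
          exact Finset.sum_congr rfl fun a _ => Finset.mul_sum _ _ _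
      _ = ∑ a ∈ Finset.range n, ∑ b ∈ Finset.range n, ∑ l,
            (((w i l a : C) : R) * (⇑δ)^[a] r) * (((w l j b : C) : R) * (⇑δ)^[b] s) := by
          rw [Finset.sum_comm]
          exact Finset.sum_congr rfl fun a _ => Finset.sum_comm
      _ = ∑ a ∈ Finset.range n, ∑ b ∈ Finset.range n,
            (((∑ l, w i l a * w l j b : C)) : R) * ((⇑δ)^[a] r * (⇑δ)^[b] s) := by
          refine Finset.sum_congr rfl fun a _ => Finset.sum_congr rfl fun b _ => ?_
          rw [coe_sum, Finset.sum_mul]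
          refine Finset.sum_congr rfl fun l _ => ?_
          rw [central_mul (((w i l a : C)) : R) (w l j b) ((⇑δ)^[a] r) ((⇑δ)^[b] s)]
          push_cast
          rfl
      _ = ∑ a ∈ Finset.range n, ((w i j a : C) : R) * ((⇑δ)^[a] r * (⇑δ)^[a] s) := by
          refine Finset.sum_congr rfl fun a ha => ?_
          rw [Finset.sum_eq_single_of_mem a ha]
          · rw [hw i j a a (Finset.mem_range.mp ha) (Finset.mem_range.mp ha), if_pos rfl]
          · intro b hb hba
            rw [hw i j a b (Finset.mem_range.mp ha) (Finset.mem_range.mp hb),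
              if_neg (Ne.symm hba)]
            simp
      _ = ∑ a ∈ Finset.range n, ((w i j a : C) : R) * (⇑δ)^[a] (r * s) := by
          refine Finset.sum_congr rfl fun a _ => ?_
          rw [iterate_map_mul]
end

section
/- Let R be a ring with 1 in which n is invertible, δ : R → R a ring endomorphism with δ^n = id_R, and T = [t_{i,j}] a transitive n×n matrix over R whose first-column entries t_{i,1} are central invertible elements with t_{i,1} ∈ Fix(δ) and t_{i,1}^n = 1 for all i. Then for every r ∈ R the matrix δ̄(r) = (1/n)[Σ_{k=0}^{n-1} t_{j,i}^k δ^k(r)] lies in the supermatrix algebra M_n(R, δ, T), i.e., δ(δ̄(r)_{i,j}) = t_{i,j} · δ̄(r)_{i,j} for all i,j. -/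
/-- If `δⁿ = id`, the first-column entries `t_{i,1}` are central invertible, fixed by `δ`
and satisfy `t_{i,1}ⁿ = 1`, then `δ̄(r)` is a `(δ, T)`-supermatrix for every `r ∈ R`,
i.e. `δ(δ̄(r)_{i,j}) = t_{i,j} ⬝ δ̄(r)_{i,j}`. -/
theorem stmt_11 {n : ℕ} (hn : 0 < n) {R : Type*} [Ring R] [Invertible (n : R)]
    (δ : R →+* R) (hδn : ∀ r : R, (⇑δ)^[n] r = r)
    (T : Matrix (Fin n) (Fin n) R) (hT : IsTransitive T)
    (hZ : ∀ i, T i ⟨0, hn⟩ ∈ Subring.center R)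
    (hU : ∀ i, IsUnit (T i ⟨0, hn⟩))
    (hfix : ∀ i, δ (T i ⟨0, hn⟩) = T i ⟨0, hn⟩)
    (hpow : ∀ i, T i ⟨0, hn⟩ ^ n = 1) :
    ∀ r : R, ∀ i j, δ (delbar δ T r i j) = T i j * delbar δ T r i j := by
  obtain ⟨hdiag, htrans⟩ := hT
  set z : Fin n := ⟨0, hn⟩ with hz
  have hinv1 : ∀ i, T i z * T z i = 1 := fun i => by rw [htrans, hdiag]
  have hinv2 : ∀ i, T z i * T i z = 1 := fun i => by rw [htrans, hdiag]
  have hZ' : ∀ i (x : R), T i z * x = x * T i z := fun i x =>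
    (Subring.mem_center_iff.mp (hZ i) x).symm
  have hZ2 : ∀ i (x : R), T z i * x = x * T z i := by
    intro i x
    calc T z i * x = T z i * (x * (T i z * T z i)) := by rw [hinv1, mul_one]
      _ = T z i * (T i z * x * T z i) := by rw [← mul_assoc x, ← hZ' i x]
      _ = (T z i * T i z) * (x * T z i) := by simp [mul_assoc]
      _ = x * T z i := by rw [hinv2, one_mul]
  have hfix2 : ∀ i, δ (T z i) = T z i := by
    intro i
    have h1 : δ (T z i) * T i z = 1 := by
      rw [← hfix i, ← map_mul, hinv2 i, map_one]
    calc δ (T z i) = δ (T z i) * (T i z * T z i) := by rw [hinv1, mul_one]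
      _ = T z i := by rw [← mul_assoc, h1, one_mul]
  have hpow2 : ∀ i, T z i ^ n = 1 := by
    intro i
    have hc : Commute (T z i) (T i z) := (hZ' i (T z i)).symm
    have h := hc.mul_pow n
    rw [hinv2 i, one_pow, hpow i, mul_one] at h
    exact h.symm
  have hdecomp : ∀ i j, T i j = T i z * T z j := fun i j => (htrans i z j).symm
  have hcen : ∀ i j (x : R), T i j * x = x * T i j := by
    intro i j x
    rw [hdecomp i j, mul_assoc, hZ2 j x, ← mul_assoc, hZ' i x, mul_assoc]
  have hfixg : ∀ i j, δ (T i j) = T i j := by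
    intro i j
    rw [hdecomp i j, map_mul, hfix i, hfix2 j]
  have hpowg : ∀ i j, T i j ^ n = 1 := by
    intro i j
    have hc : Commute (T i z) (T z j) := hZ' i (T z j)
    rw [hdecomp i j, hc.mul_pow, hpow i, hpow2 j, mul_one]
  have hinvg : ∀ i j, T i j * T j i = 1 := fun i j => by rw [htrans, hdiag]
  have hinvn : δ (⅟(n : R)) = ⅟(n : R) := by
    have h1 : δ (⅟(n : R)) * (n : R) = 1 := by
      calc δ (⅟(n : R)) * (n : R) = δ (⅟(n : R)) * δ ((n : ℕ) : R) := by rw [map_natCast]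
        _ = 1 := by rw [← map_mul, invOf_mul_self, map_one]
    calc δ (⅟(n:R)) = δ (⅟(n:R)) * ((n:R) * ⅟(n:R)) := by rw [mul_invOf_self, mul_one]
      _ = ⅟(n:R) := by rw [← mul_assoc, h1, one_mul]
  intro r i j
  have hterm : ∀ k, δ (T j i ^ k * (⇑δ)^[k] r) = T j i ^ k * (⇑δ)^[k+1] r := by
    intro k
    rw [map_mul, map_pow, hfixg j i, Function.iterate_succ_apply' δ k r]
  have huk : ∀ k, T i j * T j i ^ (k + 1) = T j i ^ k := by
    intro k
    rw [pow_succ', ← mul_assoc, hinvg i j, one_mul]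
  obtain ⟨m, rfl⟩ : ∃ m, n = m + 1 := ⟨n - 1, (Nat.succ_pred_eq_of_pos hn).symm⟩
  have hum : T i j = T j i ^ m := by
    have h := huk m
    rw [hpowg j i, mul_one] at h
    exact h
  simp only [delbar, Matrix.of_apply]
  rw [map_mul, hinvn, map_sum]
  simp only [hterm]
  rw [← mul_assoc, hcen i j (⅟(((m+1) : ℕ) : R)), mul_assoc]
  congr 1
  rw [Finset.mul_sum]
  rw [Finset.sum_range_succ, Finset.sum_range_succ']
  congr 1
  · apply Finset.sum_congr rfl
    intro k _
    rw [← mul_assoc, huk k]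
  · rw [hδn r, pow_zero, one_mul, Function.iterate_zero_apply, hum]
end

section
/- Let R be a ring with 1 in which 2 is invertible and δ : R → R a ring endomorphism. Then the map δ̄ : R → M_2(R) defined by δ̄(r) = (1/2)·[[r+δ(r), r−δ(r)], [r−δ(r), r+δ(r)]] is an injective ring homomorphism. Moreover, if δ² = id_R, then for every r ∈ R the matrix δ̄(r) lies in the supermatrix algebra M_2(R, δ, P), where P = [[1,−1],[−1,1]]. -/
/-- The map `δ̄ : R → M₂(R)`,
`δ̄(r) = (1/2) [[r + δ(r), r - δ(r)], [r - δ(r), r + δ(r)]]`. -/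
def delbar2 {R : Type*} [Ring R] [Invertible (2 : R)] (δ : R →+* R) (r : R) :
    Matrix (Fin 2) (Fin 2) R :=
  ⅟(2 : R) • !![r + δ r, r - δ r; r - δ r, r + δ r]

/-- If `1/2 ∈ R` and `δ : R → R` is an endomorphism, then `δ̄` is an injective ring
homomorphism `R → M₂(R)`; moreover if `δ² = id` then `δ̄(r)` lies in the supermatrix
algebra `M₂(R, δ, P)` with `P = [[1,-1],[-1,1]]`. -/
theorem stmt_14 {R : Type*} [Ring R] [Invertible (2 : R)] (δ : R →+* R) :
    Function.Injective (delbar2 δ) ∧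
    delbar2 δ 1 = 1 ∧
    (∀ r s : R, delbar2 δ (r + s) = delbar2 δ r + delbar2 δ s) ∧
    (∀ r s : R, delbar2 δ (r * s) = delbar2 δ r * delbar2 δ s) ∧
    ((∀ r : R, δ (δ r) = r) →
      ∀ r : R, ∀ i j : Fin 2,
        δ (delbar2 δ r i j) = (!![1, -1; -1, 1] : Matrix (Fin 2) (Fin 2) R) i j *
          delbar2 δ r i j) := by
  have hc : ∀ a : R, ⅟(2 : R) * a = a * ⅟(2 : R) := fun a =>
    ((Commute.ofNat_left 2 a).invOf_left).eq
  have hkey : ∀ x y : R, (⅟(2:R) * x) * (⅟(2:R) * y) = ⅟(2:R) * (⅟(2:R) * (x * y)) := by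
    intro x y
    rw [mul_assoc, ← mul_assoc x, ← hc x, mul_assoc, ← mul_assoc]
  have h2 : ∀ x : R, ⅟(2:R) * (⅟(2:R) * (2 * x)) = ⅟(2:R) * x := by
    intro x
    rw [← mul_assoc, ← mul_assoc, mul_assoc (⅟(2:R)), invOf_mul_self, mul_one]
  refine ⟨?_, ?_, ?_, ?_, ?_⟩
  · intro r s h
    have h1 := congrFun (congrFun h 0) 0
    have h2' := congrFun (congrFun h 0) 1
    simp only [delbar2, Matrix.smul_apply, smul_eq_mul] at h1 h2'
    simp at h1 h2'
    have hsum := congrArg₂ (· + ·) h1 h2'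
    simp only [← mul_add] at hsum
    have e : ∀ t : R, (t + δ t) + (t - δ t) = 2 * t := by intro t; noncomm_ring
    rw [e r, e s, ← mul_assoc, ← mul_assoc, invOf_mul_self, one_mul, one_mul] at hsum
    exact hsum
  · have h11 : (1:R) + 1 = 2 := one_add_one_eq_two
    ext i j
    fin_cases i <;> fin_cases j <;>
      simp [delbar2, Matrix.one_apply, h11, invOf_mul_self]
  · intro r s
    ext i j
    fin_cases i <;> fin_cases j <;>
      · simp [delbar2, mul_add, mul_sub, map_add]
        abel
  · intro r s
    ext i j
    fin_cases i <;> fin_cases j <;>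
      simp only [delbar2] <;> simp [Matrix.mul_apply, Fin.sum_univ_two]
    · rw [hkey, hkey, ← mul_add, ← mul_add,
        show (r + δ r) * (s + δ s) + (r - δ r) * (s - δ s) = 2 * (r * s + δ r * δ s) by
          noncomm_ring, h2]
    · rw [hkey, hkey, ← mul_add, ← mul_add,
        show (r + δ r) * (s - δ s) + (r - δ r) * (s + δ s) = 2 * (r * s - δ r * δ s) by
          noncomm_ring, h2]
    · rw [hkey, hkey, ← mul_add, ← mul_add,
        show (r - δ r) * (s + δ s) + (r + δ r) * (s - δ s) = 2 * (r * s - δ r * δ s) by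
          noncomm_ring, h2]
    · rw [hkey, hkey, ← mul_add, ← mul_add,
        show (r - δ r) * (s - δ s) + (r + δ r) * (s + δ s) = 2 * (r * s + δ r * δ s) by
          noncomm_ring, h2]
  · intro hδ r i j
    have hδhalf : δ (⅟(2:R)) = ⅟(2:R) := by
      have h1 : (2 : R) * δ (⅟(2:R)) = 1 := by
        have hm := map_mul δ 2 (⅟(2:R))
        rw [mul_invOf_self, map_one, map_ofNat] at hm
        exact hm.symm
      exact (invOf_eq_right_inv h1).symm
    fin_cases i <;> fin_cases j <;>
      · simp [delbar2, hδhalf, hδ, map_add, map_sub, mul_add, mul_sub, neg_mul]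
        abel
end

section
/- Let R be a ring with 1, δ : R → R a ring endomorphism, and T = [t_{i,j}] a transitive n×n matrix with all entries in the center Z(R). If A ∈ M_n(R, δ, T), then the preadjoint matrix A* also lies in M_n(R, δ, T); that is, δ(a*_{r,s}) = t_{r,s} a*_{r,s} for all 1 ≤ r,s ≤ n. -/
/-- The preadjoint matrix `A*` of `A`: its `(r, s)` entry is
`Σ sgn(π) a_{τ(1),π(τ(1))} ⋯ a_{τ(s-1),π(τ(s-1))} a_{τ(s+1),π(τ(s+1))} ⋯ a_{τ(n),π(τ(n))}`,
the sum over all `τ, π ∈ Sₙ` with `τ(s) = s` and `π(s) = r` (the factor at position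
`i = s` being omitted from the ordered product). -/
def preadj {n : ℕ} {R : Type*} [Ring R] (A : Matrix (Fin n) (Fin n) R) :
    Matrix (Fin n) (Fin n) R :=
  Matrix.of fun r s =>
    ∑ τ : Equiv.Perm (Fin n), ∑ π : Equiv.Perm (Fin n),
      if τ s = s ∧ π s = r then
        ((Equiv.Perm.sign π : ℤˣ) : ℤ) •
          (((List.finRange n).filter (fun i => i ≠ s)).map
            (fun i => A (τ i) (π (τ i)))).prod
      else 0

section aux
variable {n : ℕ} {R : Type*} [Ring R]

lemma pull_central (c a : Fin n → R) (hc : ∀ i, c i ∈ Subring.center R) :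
    ∀ l : List (Fin n), (l.map fun i => c i * a i).prod = (l.map c).prod * (l.map a).prod := by
  intro l
  induction l with
  | nil => simp
  | cons x l ih =>
    simp only [List.map_cons, List.prod_cons, ih]
    have hC : (l.map c).prod ∈ Subring.center R := by
      apply Subring.list_prod_mem
      intro y hy
      simp only [List.mem_map] at hy
      obtain ⟨i, _, rfl⟩ := hy
      exact hc i
    have h : a x * (l.map c).prod = (l.map c).prod * a x :=
      Subring.mem_center_iff.mp hC (a x)
    rw [mul_assoc, mul_assoc, ← mul_assoc (a x), h, mul_assoc]

lemma Tprod (T : Matrix (Fin n) (Fin n) R) (hZ : ∀ i j, T i j ∈ Subring.center R)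
    (hT : IsTransitive T) (τ π : Equiv.Perm (Fin n)) (r s : Fin n)
    (hτ : τ s = s) (hπ : π s = r) :
    (((List.finRange n).filter (fun i => i ≠ s)).map (fun i => T (τ i) (π (τ i)))).prod
      = T r s := by
  set Z := Subring.center R
  set T' : Fin n → Fin n → Z := fun i j => ⟨T i j, hZ i j⟩ with hT'
  have hT'mul : ∀ i j k, T' i j * T' j k = T' i k := fun i j k => Subtype.ext (hT.2 i j k)
  have hT'one : ∀ i, T' i i = 1 := fun i => Subtype.ext (hT.1 i)
  set l := (List.finRange n).filter (fun i => i ≠ s) with hl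
  have step1 : (l.map (fun i => T (τ i) (π (τ i)))).prod
      = (Z.subtype) ((l.map (fun i => T' (τ i) (π (τ i)))).prod) := by
    rw [map_list_prod, List.map_map]
    rfl
  rw [step1]
  suffices h : (l.map (fun i => T' (τ i) (π (τ i)))).prod = T' r s by rw [h]; rfl
  have hnd : l.Nodup := (List.nodup_finRange n).filter _
  have htf : l.toFinset = Finset.univ.erase s := by
    ext i
    simp [hl, List.mem_filter, List.mem_finRange, Finset.mem_erase, decide_eq_true_eq]
  have step2 : (l.map (fun i => T' (τ i) (π (τ i)))).prod
      = ∏ i ∈ Finset.univ.erase s, T' (τ i) (π (τ i)) := by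
    rw [← htf, List.prod_toFinset _ hnd]
  rw [step2]
  have himg : (Finset.univ.erase s).image τ = Finset.univ.erase s := by
    ext j
    simp only [Finset.mem_image, Finset.mem_erase, Finset.mem_univ, and_true]
    constructor
    · rintro ⟨i, hi, rfl⟩
      intro h; exact hi ((τ.injective (h.trans hτ.symm)))
    · intro hj
      refine ⟨τ.symm j, ?_, τ.apply_symm_apply j⟩
      intro h
      apply hj
      rw [← hτ, ← h, τ.apply_symm_apply]
  have step3 : ∏ i ∈ Finset.univ.erase s, T' (τ i) (π (τ i))
      = ∏ j ∈ Finset.univ.erase s, T' j (π j) := by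
    conv_rhs => rw [← himg]
    rw [Finset.prod_image (fun a _ b _ h => τ.injective h)]
  rw [step3]
  set u : Fin n → Zˣ := fun j =>
    ⟨T' j s, T' s j, by rw [hT'mul, hT'one], by rw [hT'mul, hT'one]⟩ with hu
  have hval : ∀ j, T' j (π j) = ((u j * (u (π j))⁻¹ : Zˣ) : Z) := by
    intro j
    have : ((u j * (u (π j))⁻¹ : Zˣ) : Z) = T' j s * T' s (π j) := rfl
    rw [this, hT'mul]
  have hunit : (∏ j ∈ Finset.univ.erase s, (u j * (u (π j))⁻¹)) = u r := by
    rw [Finset.prod_mul_distrib, Finset.prod_inv_distrib]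
    have himgπ : (Finset.univ.erase s).image π = Finset.univ.erase r := by
      ext j
      simp only [Finset.mem_image, Finset.mem_erase, Finset.mem_univ, and_true]
      constructor
      · rintro ⟨i, hi, rfl⟩
        intro h; exact hi (π.injective (h.trans hπ.symm))
      · intro hj
        refine ⟨π.symm j, ?_, π.apply_symm_apply j⟩
        intro h
        apply hj
        rw [← hπ, ← h, π.apply_symm_apply]
    have hπprod : ∏ j ∈ Finset.univ.erase s, u (π j) = ∏ k ∈ Finset.univ.erase r, u k := by
      rw [← himgπ, Finset.prod_image (fun a _ b _ h => π.injective h)]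
    rw [hπprod]
    have hs : ∏ j ∈ Finset.univ.erase s, u j = (u s)⁻¹ * ∏ j : Fin n, u j := by
      rw [← Finset.mul_prod_erase Finset.univ u (Finset.mem_univ s), ← mul_assoc,
        inv_mul_cancel, one_mul]
    have hr : ∏ j ∈ Finset.univ.erase r, u j = (u r)⁻¹ * ∏ j : Fin n, u j := by
      rw [← Finset.mul_prod_erase Finset.univ u (Finset.mem_univ r), ← mul_assoc,
        inv_mul_cancel, one_mul]
    rw [hs, hr]
    have hus : u s = 1 := Units.ext (hT'one s)
    rw [hus, inv_one, one_mul, mul_inv_rev, inv_inv, ← mul_assoc, mul_inv_cancel, one_mul]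
  calc ∏ j ∈ Finset.univ.erase s, T' j (π j)
      = ∏ j ∈ Finset.univ.erase s, ((u j * (u (π j))⁻¹ : Zˣ) : Z) :=
        Finset.prod_congr rfl fun j _ => hval j
    _ = ((∏ j ∈ Finset.univ.erase s, (u j * (u (π j))⁻¹) : Zˣ) : Z) := by
        rw [← Units.coeHom_apply, map_prod]; rfl
    _ = T' r s := by rw [hunit]

end aux

/-- If `T` is transitive with central entries and `A ∈ M_n(R, δ, T)` is a supermatrix,
then the preadjoint `A*` is also a supermatrix: `δ(a*_{r,s}) = t_{r,s} a*_{r,s}`. -/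
theorem stmt_15 {n : ℕ} {R : Type*} [Ring R] (δ : R →+* R)
    (T : Matrix (Fin n) (Fin n) R) (hZ : ∀ i j, T i j ∈ Subring.center R)
    (hT : IsTransitive T)
    (A : Matrix (Fin n) (Fin n) R) (hA : ∀ i j, δ (A i j) = T i j * A i j) :
    ∀ r s, δ (preadj A r s) = T r s * preadj A r s := by
  intro r s
  unfold preadj
  simp only [Matrix.of_apply]
  rw [map_sum, Finset.mul_sum]
  refine Finset.sum_congr rfl fun τ _ => ?_
  rw [map_sum, Finset.mul_sum]
  refine Finset.sum_congr rfl fun π _ => ?_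
  by_cases h : τ s = s ∧ π s = r
  · rw [if_pos h, map_zsmul, mul_smul_comm]
    congr 1
    rw [map_list_prod, List.map_map]
    have heq : (δ ∘ fun i => A (τ i) (π (τ i)))
        = fun i => T (τ i) (π (τ i)) * A (τ i) (π (τ i)) := by
      funext i; exact hA _ _
    rw [heq, pull_central _ _ (fun i => hZ _ _), Tprod T hZ hT τ π r s h.1 h.2]
  · simp [h]
end

section
/- Let R be a ring with 1, δ : R → R a ring endomorphism, and T = [t_{i,j}] a transitive n×n matrix with all entries in the center Z(R). If A ∈ M_n(R, δ, T), then for every k ≥ 1 the k-th right determinant rdet_(k)(A) and the k-th left determinant ldet_(k)(A) lie in the fixed subring Fix(δ). In particular, the symmetric determinant sdet(A) = rdet_(1)(A) = ldet_(1)(A) lies in Fix(δ). -/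
/-- The symmetric determinant
`sdet(A) = Σ_{τ,π ∈ Sₙ} sgn(π) a_{τ(1),π(τ(1))} ⋯ a_{τ(n),π(τ(n))}`. -/
def sdet {n : ℕ} {R : Type*} [Ring R] (A : Matrix (Fin n) (Fin n) R) : R :=
  ∑ τ : Equiv.Perm (Fin n), ∑ π : Equiv.Perm (Fin n),
    ((Equiv.Perm.sign π : ℤˣ) : ℤ) •
      ((List.finRange n).map (fun i => A (τ i) (π (τ i)))).prod

/-- The right adjoint sequence of `A`: `rightSeq A k = (P_{k+1}, A P₁ ⋯ P_{k+1})` where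
`P₁ = A*` and `P_{k+1} = (A P₁ ⋯ P_k)*`. -/
def rightSeq {n : ℕ} {R : Type*} [Ring R] (A : Matrix (Fin n) (Fin n) R) :
    ℕ → Matrix (Fin n) (Fin n) R × Matrix (Fin n) (Fin n) R
  | 0 => (preadj A, A * preadj A)
  | k + 1 => (preadj (rightSeq A k).2, (rightSeq A k).2 * preadj (rightSeq A k).2)

/-- The `k`-th right determinant `rdet_(k)(A) = tr(A P₁ ⋯ P_k)` (for `k ≥ 1`). -/
def rdet {n : ℕ} {R : Type*} [Ring R] (k : ℕ) (A : Matrix (Fin n) (Fin n) R) : R :=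
  Matrix.trace (rightSeq A (k - 1)).2

/-- The left adjoint sequence of `A`: `leftSeq A k = (Q_{k+1}, Q_{k+1} ⋯ Q₁ A)` where
`Q₁ = A*` and `Q_{k+1} = (Q_k ⋯ Q₁ A)*`. -/
def leftSeq {n : ℕ} {R : Type*} [Ring R] (A : Matrix (Fin n) (Fin n) R) :
    ℕ → Matrix (Fin n) (Fin n) R × Matrix (Fin n) (Fin n) R
  | 0 => (preadj A, preadj A * A)
  | k + 1 => (preadj (leftSeq A k).2, preadj (leftSeq A k).2 * (leftSeq A k).2)

/-- The `k`-th left determinant `ldet_(k)(A) = tr(Q_k ⋯ Q₁ A)` (for `k ≥ 1`). -/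
def ldet {n : ℕ} {R : Type*} [Ring R] (k : ℕ) (A : Matrix (Fin n) (Fin n) R) : R :=
  Matrix.trace (leftSeq A (k - 1)).2

section Aux
open Finset

lemma list_filter_map_prod {ι M : Type*} [Monoid M] (p : ι → Prop) [DecidablePred p]
    (f : ι → M) : ∀ l : List ι,
    ((l.filter (fun i => p i)).map f).prod = (l.map (fun i => if p i then f i else 1)).prod
  | [] => rfl
  | a :: l => by
    by_cases h : p a <;>
      simp [List.filter_cons, h, list_filter_map_prod p f l]

lemma list_filter_ne_prod {n : ℕ} {M : Type*} [CommMonoid M] (s : Fin n) (f : Fin n → M) :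
    (((List.finRange n).filter (fun i => i ≠ s)).map f).prod
      = ∏ i ∈ Finset.univ.erase s, f i := by
  rw [list_filter_map_prod (fun i => i ≠ s) f, ← Fin.prod_univ_def,
    ← Finset.prod_filter, Finset.filter_ne']

lemma list_prod_center_split {ι : Type*} {R : Type*} [Ring R] (c f : ι → R)
    (hc : ∀ i, c i ∈ Subring.center R) :
    ∀ l : List ι, (l.map (fun i => c i * f i)).prod = (l.map c).prod * (l.map f).prod
  | [] => by simp
  | a :: l => by
    simp only [List.map_cons, List.prod_cons, list_prod_center_split c f hc l]
    have h1 : (l.map c).prod ∈ Subring.center R :=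
      Subring.list_prod_mem _ (by
        intro x hx
        rcases List.mem_map.mp hx with ⟨i, _, rfl⟩
        exact hc i)
    have h2 : f a * (l.map c).prod = (l.map c).prod * f a :=
      Subring.mem_center_iff.mp h1 (f a)
    calc c a * f a * ((l.map c).prod * (l.map f).prod)
        = c a * (f a * (l.map c).prod * (l.map f).prod) := by
          rw [mul_assoc, mul_assoc]
      _ = c a * ((l.map c).prod * f a * (l.map f).prod) := by rw [h2]
      _ = c a * (l.map c).prod * (f a * (l.map f).prod) := by
          rw [mul_assoc, mul_assoc]

lemma image_erase_perm {n : ℕ} (π : Equiv.Perm (Fin n)) (s : Fin n) :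
    (Finset.univ.erase s).image π = Finset.univ.erase (π s) := by
  ext j
  simp only [Finset.mem_image, Finset.mem_erase, Finset.mem_univ, and_true]
  constructor
  · rintro ⟨a, ha, rfl⟩
    exact fun h => ha (π.injective h)
  · intro h
    exact ⟨π⁻¹ j, fun hc => h (by rw [← hc]; simp), by simp⟩

lemma perm_prod_univ {n : ℕ} {M : Type*} [CommRing M] (c : Fin n → Fin n → M)
    (hone : ∀ i, c i i = 1) (htr : ∀ i j k, c i j * c j k = c i k)
    (π : Equiv.Perm (Fin n)) : ∏ j, c j (π j) = 1 := by
  rcases Nat.eq_zero_or_pos n with h | h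
  · subst h; simp
  · set z : Fin n := ⟨0, h⟩
    have h1 : ∏ j, c j (π j) = (∏ j, c j z) * ∏ j, c z (π j) := by
      rw [← Finset.prod_mul_distrib]
      exact Finset.prod_congr rfl fun j _ => (htr j z (π j)).symm
    rw [h1, Equiv.prod_comp π (fun j => c z j), ← Finset.prod_mul_distrib]
    simp [htr, hone]

lemma perm_prod_erase {n : ℕ} {M : Type*} [CommRing M] (c : Fin n → Fin n → M)
    (hone : ∀ i, c i i = 1) (htr : ∀ i j k, c i j * c j k = c i k)
    (π : Equiv.Perm (Fin n)) (s : Fin n) :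
    ∏ j ∈ Finset.univ.erase s, c j (π j) = c (π s) s := by
  have h2 : (∏ j ∈ Finset.univ.erase s, c s (π j)) = ∏ j ∈ Finset.univ.erase (π s), c s j := by
    rw [← image_erase_perm π s]
    exact (Finset.prod_image fun x _ y _ h => π.injective h).symm
  have e1 : (∏ j ∈ Finset.univ.erase s, c j s) * c s s = ∏ j, c j s :=
    Finset.prod_erase_mul _ _ (Finset.mem_univ s)
  have e2 : (∏ j ∈ Finset.univ.erase (π s), c s j) * c s (π s) = ∏ j, c s j :=
    Finset.prod_erase_mul _ _ (Finset.mem_univ (π s))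
  have hfull : (∏ j, c j s) * (∏ j, c s j) = 1 := by
    rw [← Finset.prod_mul_distrib]
    simp [htr, hone]
  have hsplit : (∏ j ∈ Finset.univ.erase s, c j (π j))
      = (∏ j ∈ Finset.univ.erase s, c j s) * ∏ j ∈ Finset.univ.erase s, c s (π j) := by
    rw [← Finset.prod_mul_distrib]
    exact Finset.prod_congr rfl fun j _ => (htr j s (π j)).symm
  calc (∏ j ∈ Finset.univ.erase s, c j (π j))
      = (∏ j ∈ Finset.univ.erase s, c j (π j)) * (c s (π s) * c (π s) s) := by
        rw [htr s (π s) s, hone, mul_one]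
    _ = ((∏ j ∈ Finset.univ.erase s, c j s) * c s s)
          * ((∏ j ∈ Finset.univ.erase (π s), c s j) * c s (π s)) * c (π s) s := by
        rw [hsplit, h2, hone s]; ring
    _ = ((∏ j, c j s) * (∏ j, c s j)) * c (π s) s := by rw [e1, e2]
    _ = c (π s) s := by rw [hfull, one_mul]

end Aux

section Super
variable {n : ℕ} {R : Type*} [Ring R] (δ : R →+* R) (T : Matrix (Fin n) (Fin n) R)
  (hZ : ∀ i j, T i j ∈ Subring.center R) (hT : IsTransitive T)
include hZ hT

lemma super_mul (A B : Matrix (Fin n) (Fin n) R)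
    (hA : ∀ i j, δ (A i j) = T i j * A i j) (hB : ∀ i j, δ (B i j) = T i j * B i j) :
    ∀ i j, δ ((A * B) i j) = T i j * (A * B) i j := by
  intro i j
  rw [Matrix.mul_apply, map_sum, Finset.mul_sum]
  refine Finset.sum_congr rfl fun k _ => ?_
  rw [map_mul, hA, hB]
  have hc : A i k * T k j = T k j * A i k := Subring.mem_center_iff.mp (hZ k j) (A i k)
  rw [← mul_assoc, mul_assoc (T i k), hc, ← mul_assoc, hT.2 i k j, mul_assoc]

lemma super_trace (A : Matrix (Fin n) (Fin n) R)
    (hA : ∀ i j, δ (A i j) = T i j * A i j) :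
    δ (Matrix.trace A) = Matrix.trace A := by
  simp [Matrix.trace, Matrix.diag, map_sum, hA, hT.1]

lemma super_preadj (A : Matrix (Fin n) (Fin n) R)
    (hA : ∀ i j, δ (A i j) = T i j * A i j) :
    ∀ r s, δ (preadj A r s) = T r s * preadj A r s := by
  intro r s
  set c : Fin n → Fin n → Subring.center R := fun i j => ⟨T i j, hZ i j⟩ with hc
  have hone : ∀ i, c i i = 1 := fun i => Subtype.ext (hT.1 i)
  have htr : ∀ i j k, c i j * c j k = c i k := fun i j k => Subtype.ext (hT.2 i j k)
  unfold preadj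
  simp only [Matrix.of_apply]
  rw [map_sum, Finset.mul_sum]
  refine Finset.sum_congr rfl fun τ _ => ?_
  rw [map_sum, Finset.mul_sum]
  refine Finset.sum_congr rfl fun π _ => ?_
  by_cases h : τ s = s ∧ π s = r
  · rw [if_pos h, map_zsmul, map_list_prod, List.map_map]
    have hδ : (⇑δ ∘ fun i => A (τ i) (π (τ i)))
        = fun i => T (τ i) (π (τ i)) * A (τ i) (π (τ i)) := funext fun i => hA _ _
    rw [hδ, list_prod_center_split _ _ (fun i => hZ _ _)]
    have ht : (((List.finRange n).filter (fun i => i ≠ s)).map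
        (fun i => T (τ i) (π (τ i)))).prod = T r s := by
      have hcoe : (((List.finRange n).filter (fun i => i ≠ s)).map
          (fun i => T (τ i) (π (τ i)))).prod
          = ((Subring.center R).subtype)
            ((((List.finRange n).filter (fun i => i ≠ s)).map
              (fun i => c (τ i) (π (τ i)))).prod) := by
        rw [map_list_prod, List.map_map]
        rfl
      rw [hcoe, list_filter_ne_prod s (fun i => c (τ i) (π (τ i)))]
      have himg : (∏ i ∈ Finset.univ.erase s, c (τ i) (π (τ i)))
          = ∏ j ∈ Finset.univ.erase s, c j (π j) := by
        have := Finset.prod_image (f := fun j => c j (π j))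
          (s := Finset.univ.erase s) (g := ⇑τ) (fun x _ y _ hxy => τ.injective hxy)
        rw [← this, image_erase_perm τ s, h.1]
      rw [himg, perm_prod_erase c hone htr π s, h.2]
      rfl
    rw [ht, mul_smul_comm]
  · rw [if_neg h, map_zero, mul_zero]

lemma super_sdet (A : Matrix (Fin n) (Fin n) R)
    (hA : ∀ i j, δ (A i j) = T i j * A i j) :
    δ (sdet A) = sdet A := by
  set c : Fin n → Fin n → Subring.center R := fun i j => ⟨T i j, hZ i j⟩ with hc
  have hone : ∀ i, c i i = 1 := fun i => Subtype.ext (hT.1 i)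
  have htr : ∀ i j k, c i j * c j k = c i k := fun i j k => Subtype.ext (hT.2 i j k)
  unfold sdet
  rw [map_sum]
  refine Finset.sum_congr rfl fun τ _ => ?_
  rw [map_sum]
  refine Finset.sum_congr rfl fun π _ => ?_
  rw [map_zsmul, map_list_prod, List.map_map]
  have hδ : (⇑δ ∘ fun i => A (τ i) (π (τ i)))
      = fun i => T (τ i) (π (τ i)) * A (τ i) (π (τ i)) := funext fun i => hA _ _
  rw [hδ, list_prod_center_split _ _ (fun i => hZ _ _)]
  have ht : (((List.finRange n)).map (fun i => T (τ i) (π (τ i)))).prod = 1 := by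
    have hcoe : (((List.finRange n)).map (fun i => T (τ i) (π (τ i)))).prod
        = ((Subring.center R).subtype)
          ((((List.finRange n)).map (fun i => c (τ i) (π (τ i)))).prod) := by
      rw [map_list_prod, List.map_map]
      rfl
    rw [hcoe, ← Fin.prod_univ_def, Equiv.prod_comp τ (fun j => c j (π j))]
    rw [perm_prod_univ c hone htr π, map_one]
  rw [ht, one_mul]

end Super

/-- If `T` is transitive with central entries and `A ∈ M_n(R, δ, T)`, then all right and
left determinants of `A` lie in `Fix(δ)`; in particular `sdet(A) ∈ Fix(δ)`. -/
theorem stmt_16 {n : ℕ} {R : Type*} [Ring R] (δ : R →+* R)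
    (T : Matrix (Fin n) (Fin n) R) (hZ : ∀ i j, T i j ∈ Subring.center R)
    (hT : IsTransitive T)
    (A : Matrix (Fin n) (Fin n) R) (hA : ∀ i j, δ (A i j) = T i j * A i j) :
    (∀ k : ℕ, 1 ≤ k → δ (rdet k A) = rdet k A) ∧
    (∀ k : ℕ, 1 ≤ k → δ (ldet k A) = ldet k A) ∧
    δ (sdet A) = sdet A := by
  have hR : ∀ k : ℕ, (∀ i j, δ ((rightSeq A k).1 i j) = T i j * (rightSeq A k).1 i j)
      ∧ (∀ i j, δ ((rightSeq A k).2 i j) = T i j * (rightSeq A k).2 i j) := by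
    intro k
    induction k with
    | zero =>
      exact ⟨super_preadj δ T hZ hT A hA,
        super_mul δ T hZ hT A (preadj A) hA (super_preadj δ T hZ hT A hA)⟩
    | succ k ih =>
      simp only [rightSeq]
      exact ⟨super_preadj δ T hZ hT _ ih.2,
        super_mul δ T hZ hT _ _ ih.2 (super_preadj δ T hZ hT _ ih.2)⟩
  have hL : ∀ k : ℕ, (∀ i j, δ ((leftSeq A k).1 i j) = T i j * (leftSeq A k).1 i j)
      ∧ (∀ i j, δ ((leftSeq A k).2 i j) = T i j * (leftSeq A k).2 i j) := by
    intro k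
    induction k with
    | zero =>
      exact ⟨super_preadj δ T hZ hT A hA,
        super_mul δ T hZ hT (preadj A) A (super_preadj δ T hZ hT A hA) hA⟩
    | succ k ih =>
      simp only [leftSeq]
      exact ⟨super_preadj δ T hZ hT _ ih.2,
        super_mul δ T hZ hT _ _ (super_preadj δ T hZ hT _ ih.2) ih.2⟩
  exact ⟨fun k _ => super_trace δ T hZ hT _ (hR (k - 1)).2,
    fun k _ => super_trace δ T hZ hT _ (hL (k - 1)).2,
    super_sdet δ T hZ hT A hA⟩
end

section
/- Let R be a ring with 1, δ : R → R a ring endomorphism, and T = [t_{i,j}] a transitive n×n matrix with all entries in the center Z(R). If A ∈ M_n(R, δ, T), then for every k ≥ 1 all coefficients of the k-th right characteristic polynomial p_{A,k}(z) = rdet_(k)(z I_n − A) and of the k-th left characteristic polynomial q_{A,k}(z) = ldet_(k)(z I_n − A), computed in the polynomial ring R[z] over a central commuting indeterminate z, lie in the fixed subring Fix(δ). -/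
/-- The matrix `z Iₙ - A` over the polynomial ring `R[z]`. -/
noncomputable def zIsub {n : ℕ} {R : Type*} [Ring R] (A : Matrix (Fin n) (Fin n) R) :
    Matrix (Fin n) (Fin n) (Polynomial R) :=
  Matrix.of fun i j => (if i = j then Polynomial.X else 0) - Polynomial.C (A i j)

/-!
Choosing a base point `s`, transitivity gives `t i j = t i s * t s j`, so for every permutation
`π` the central product `∏ⱼ t j (π j)` telescopes to `∏ⱼ t j j = 1`. Hence each monomial of the
`(r, s)` entry of the preadjoint picks up exactly the scalar `t r s` under `δ`: the preadjoint of
a matrix in `M_n(R, δ, T)` is again in `M_n(R, δ, T)`, and so is a product of two such matrices.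
By induction every matrix of the right and left adjoint sequences lies in `M_n(R, δ, T)`, and its
trace is fixed by `δ` since `t i i = 1`. Applied over `R[z]` with the endomorphism
`Polynomial.map δ` and the matrix `C T` to `z Iₙ - A`, this shows that the characteristic
polynomials are fixed by `Polynomial.map δ`, i.e. their coefficients are fixed by `δ`.
-/

open Finset Polynomial

variable {n : ℕ}

theorem Polynomial.C_mem_center {R : Type*} [Ring R] {a : R} (ha : a ∈ Subring.center R) :
    C a ∈ Subring.center R[X] :=
  Subring.mem_center_iff.2 fun p => Polynomial.ext fun m => by
    rw [coeff_C_mul, coeff_mul_C, Subring.mem_center_iff.1 ha]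

theorem List.prod_map_mul_of_mem_center {ι R : Type*} [Ring R] (l : List ι) (c a : ι → R)
    (hc : ∀ i, c i ∈ Subring.center R) :
    (l.map fun i => c i * a i).prod = (l.map c).prod * (l.map a).prod := by
  induction l with
  | nil => simp
  | cons i l ih =>
    have hcomm : Commute (a i) (l.map c).prod :=
      (Commute.list_prod_left _ _ fun x hx => by
        obtain ⟨j, -, rfl⟩ := List.mem_map.1 hx
        exact (Subring.mem_center_iff.1 (hc j) (a i)).symm).symm
    simp only [List.map_cons, List.prod_cons, ih]
    rw [mul_assoc, ← mul_assoc (a i), hcomm.eq, mul_assoc, mul_assoc]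

namespace IsTransitive

theorem map {R S : Type*} [Ring R] [Ring S] {T : Matrix (Fin n) (Fin n) R}
    (hT : IsTransitive T) (f : R →+* S) : IsTransitive (T.map f) :=
  ⟨fun i => by simp [hT.1 i], fun i j k => by simp [← map_mul, hT.2 i j k]⟩

section CommRing

variable {M : Type*} [CommRing M] {T : Matrix (Fin n) (Fin n) M}

theorem prod_perm_eq_one (hT : IsTransitive T) (π : Equiv.Perm (Fin n)) :
    ∏ j, T j (π j) = 1 := by
  rcases isEmpty_or_nonempty (Fin n) with _ | ⟨⟨s⟩⟩
  · simp
  calc ∏ j, T j (π j) = (∏ j, T j s) * ∏ j, T s (π j) := by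
        rw [← prod_mul_distrib]; simp only [hT.2]
    _ = (∏ j, T j s) * ∏ j, T s j := by rw [Equiv.prod_comp π (T s)]
    _ = 1 := by rw [← prod_mul_distrib]; simp only [hT.2, hT.1, prod_const_one]

theorem prod_erase_perm (hT : IsTransitive T) (π : Equiv.Perm (Fin n)) (s : Fin n) :
    ∏ j ∈ univ.erase s, T j (π j) = T (π s) s := by
  have h := hT.prod_perm_eq_one π
  rw [← mul_prod_erase univ _ (mem_univ s)] at h
  calc ∏ j ∈ univ.erase s, T j (π j)
      = T (π s) s * T s (π s) * ∏ j ∈ univ.erase s, T j (π j) := by rw [hT.2, hT.1, one_mul]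
    _ = T (π s) s := by rw [mul_assoc, h, mul_one]

theorem prod_preadj_term (hT : IsTransitive T) {τ : Equiv.Perm (Fin n)} {s : Fin n}
    (hτ : τ s = s) (π : Equiv.Perm (Fin n)) :
    (((List.finRange n).filter (fun i => i ≠ s)).map fun i => T (τ i) (π (τ i))).prod =
      T (π s) s := by
  have hsupp : {a | τ a ≠ a} ⊆ ↑(univ.erase s) := fun a ha =>
    mem_erase.2 ⟨fun has => ha (has ▸ hτ), mem_univ a⟩
  have htoFinset : ((List.finRange n).filter (fun i => i ≠ s)).toFinset = univ.erase s := by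
    ext; simp
  rw [← List.prod_toFinset _ ((List.nodup_finRange n).filter _), htoFinset,
    τ.prod_comp _ (fun j => T j (π j)) hsupp, hT.prod_erase_perm]

end CommRing

end IsTransitive

/-- Membership in the supermatrix algebra `M_n(R, δ, T)`. -/
def IsSupermatrix {R : Type*} [Ring R] (δ : R →+* R) (T B : Matrix (Fin n) (Fin n) R) : Prop :=
  ∀ i j, δ (B i j) = T i j * B i j

namespace IsSupermatrix

variable {R : Type*} [Ring R] {δ : R →+* R} {T B D : Matrix (Fin n) (Fin n) R}

theorem mul (hZ : ∀ i j, T i j ∈ Subring.center R) (hT : IsTransitive T)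
    (hB : IsSupermatrix δ T B) (hD : IsSupermatrix δ T D) : IsSupermatrix δ T (B * D) := by
  intro i j
  rw [Matrix.mul_apply, map_sum, mul_sum]
  refine sum_congr rfl fun k _ => ?_
  rw [map_mul, hB, hD, ← hT.2 i k j]
  calc T i k * B i k * (T k j * D k j) = T i k * (B i k * T k j) * D k j := by
        simp only [mul_assoc]
    _ = T i k * T k j * (B i k * D k j) := by
        rw [Subring.mem_center_iff.1 (hZ k j) (B i k)]; simp only [mul_assoc]

theorem preadj (hZ : ∀ i j, T i j ∈ Subring.center R) (hT : IsTransitive T)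
    (hB : IsSupermatrix δ T B) : IsSupermatrix δ T (preadj B) := by
  -- the telescoping identity needs commutativity, so it is computed in the center
  let Tc : Matrix (Fin n) (Fin n) (Subring.center R) := Matrix.of fun i j => ⟨T i j, hZ i j⟩
  have hTc : IsTransitive Tc :=
    ⟨fun i => Subtype.ext (hT.1 i), fun i j k => Subtype.ext (hT.2 i j k)⟩
  intro r s
  simp only [_root_.preadj, Matrix.of_apply, map_sum, mul_sum]
  refine sum_congr rfl fun τ _ => sum_congr rfl fun π _ => ?_
  split_ifs with h
  · obtain ⟨hτ, rfl⟩ := h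
    have hcoeff : (((List.finRange n).filter (fun i => i ≠ s)).map
        fun i => T (τ i) (π (τ i))).prod = T (π s) s := by
      simpa [Tc, List.map_map, Function.comp_def] using
        congrArg Subtype.val (hTc.prod_preadj_term (τ := τ) hτ π)
    rw [map_zsmul, mul_smul_comm, map_list_prod, List.map_map]
    simp only [Function.comp_def, hB _ _]
    rw [List.prod_map_mul_of_mem_center _ _ _ fun i => hZ _ _, hcoeff]
  · rw [map_zero, mul_zero]

theorem rightSeq (hZ : ∀ i j, T i j ∈ Subring.center R) (hT : IsTransitive T)
    (hB : IsSupermatrix δ T B) (k : ℕ) : IsSupermatrix δ T (rightSeq B k).2 := by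
  induction k with
  | zero => exact hB.mul hZ hT (hB.preadj hZ hT)
  | succ k ih => exact ih.mul hZ hT (ih.preadj hZ hT)

theorem leftSeq (hZ : ∀ i j, T i j ∈ Subring.center R) (hT : IsTransitive T)
    (hB : IsSupermatrix δ T B) (k : ℕ) : IsSupermatrix δ T (leftSeq B k).2 := by
  induction k with
  | zero => exact (hB.preadj hZ hT).mul hZ hT hB
  | succ k ih => exact (ih.preadj hZ hT).mul hZ hT ih

theorem map_trace (hT : IsTransitive T) (hB : IsSupermatrix δ T B) :
    δ B.trace = B.trace := by
  simp only [Matrix.trace, Matrix.diag_apply, map_sum, hB _ _, hT.1, one_mul]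

theorem zIsub (hT : IsTransitive T) (hB : IsSupermatrix δ T B) :
    IsSupermatrix (mapRingHom δ) (T.map C) (zIsub B) := by
  intro i j
  by_cases h : i = j
  · subst h
    simp [_root_.zIsub, hB i i, hT.1 i]
  · simp [_root_.zIsub, h, hB i j]

end IsSupermatrix

/-- If `T` is transitive with central entries and `A ∈ M_n(R, δ, T)`, then all
coefficients of the right characteristic polynomials `p_{A,k}(z) = rdet_(k)(z Iₙ - A)`
and of the left characteristic polynomials `q_{A,k}(z) = ldet_(k)(z Iₙ - A)` lie in
`Fix(δ)`, for every `k ≥ 1`. -/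
theorem stmt_17 {n : ℕ} {R : Type*} [Ring R] (δ : R →+* R)
    (T : Matrix (Fin n) (Fin n) R) (hZ : ∀ i j, T i j ∈ Subring.center R)
    (hT : IsTransitive T)
    (A : Matrix (Fin n) (Fin n) R) (hA : ∀ i j, δ (A i j) = T i j * A i j) :
    ∀ k : ℕ, 1 ≤ k → ∀ m : ℕ,
      δ ((rdet k (zIsub A)).coeff m) = (rdet k (zIsub A)).coeff m ∧
      δ ((ldet k (zIsub A)).coeff m) = (ldet k (zIsub A)).coeff m := by
  intro k _ m
  have hZC : ∀ i j, T.map C i j ∈ Subring.center R[X] := fun i j => C_mem_center (hZ i j)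
  have hTC := hT.map C
  have hzA := IsSupermatrix.zIsub hT hA
  have coeff_fixed {p : R[X]} (hp : mapRingHom δ p = p) : δ (p.coeff m) = p.coeff m := by
    rw [← coeff_map, ← coe_mapRingHom, hp]
  exact ⟨coeff_fixed ((hzA.rightSeq hZC hTC (k - 1)).map_trace hTC),
    coeff_fixed ((hzA.leftSeq hZC hTC (k - 1)).map_trace hTC)⟩
end
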